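/- Let c belong to the class PS(t0,Λ1,Λ2,S,γ) with γ non-increasing, and let c∞ ∈ [Λ1,Λ2] be its stabilization constant. Then for every real number λ > 0 and every solution u of u''(t) + λ² c(t) u(t) = 0 on [t0,∞), the Kowaleskian energy E(t) = u'(t)²/√c∞ + λ²√c∞·u(t)² satisfies E(t) ≤ E(t0)·H3·exp(H4·M(t)^{1/2}) for all t ≥ t0, where H3 = max{ 3Λ2/Λ1 , exp( γ(t0)S(t0)/(2Λ1²) ) } and H4 = (2Λ1+3)^{1/2}/Λ1^{3/2}. -/

import Mathlib

/-!
Two energies are played against each other. The Kowaleskian energy `E`, built on the limit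
coefficient `c∞`, satisfies `E' ≤ λ |c - c∞| E / √Λ1`, so by Grönwall it grows after any time `σ`
by at most `exp (λ S(σ) / √Λ1)`. The energy `F` built on the current coefficient `√c`, once
corrected by `c' u u' / (2 c^{3/2})`, has a derivative of size `γ² F / λ` only; keeping the
correction below `F / 2` needs `γ ≤ 2 λ Λ1^{3/2}`, which holds for all times as soon as it holds
at `t0` because `γ` is non-increasing. Then `F` grows on `[t0, σ]` by at most
`3 exp (K G(σ))` with `K = (2Λ1 + 3) / (4 Λ1^{5/2} λ)`. As `E` and `F` are comparable up to the
factor `√(Λ2/Λ1)`, switching from `F` to `E` at a time `σ` where `K G(σ) = λ S(σ) / √Λ1` gives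
the exponent `2 √(K G(σ) λ S(σ) / √Λ1) = H4 √(G(σ) S(σ)) ≤ H4 √M(t)`. When instead
`γ(t0) > 2 λ Λ1^{3/2}`, the estimate for `E` from `t0` alone gives the factor
`exp (γ(t0) S(t0) / (2 Λ1²))`.
-/

open Real Set Filter MeasureTheory

/-- The Kowaleskian energy `E(t) = u'(t)²/√c∞ + λ²·√c∞·u(t)²`. -/
noncomputable def kowE (cinf lam : ℝ) (u u' : ℝ → ℝ) (t : ℝ) : ℝ :=
  (u' t) ^ 2 / Real.sqrt cinf + lam ^ 2 * Real.sqrt cinf * (u t) ^ 2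

/-- `G(t) = ∫_{t0}^t γ(τ)² dτ`. -/
noncomputable def Gfun (t0 : ℝ) (γ : ℝ → ℝ) (t : ℝ) : ℝ :=
  ∫ τ in t0..t, (γ τ) ^ 2

/-- `M(t) = max { G(τ)·S(τ) : τ ∈ [t0,t] }`. -/
noncomputable def Mfun (t0 : ℝ) (γ S : ℝ → ℝ) (t : ℝ) : ℝ :=
  sSup ((fun τ => Gfun t0 γ τ * S τ) '' Icc t0 t)

theorem continuousOn_primitive_of_continuousOn {g : ℝ → ℝ} {a b : ℝ} (hab : a ≤ b)
    (hg : ContinuousOn g (Icc a b)) : ContinuousOn (fun x => ∫ y in a..x, g y) (Icc a b) := by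
  have h := intervalIntegral.continuousOn_primitive_interval
    (uIcc_of_le hab ▸ hg.integrableOn_Icc (μ := volume))
  rwa [uIcc_of_le hab] at h

theorem le_mul_exp_integral_of_hasDerivWithinAt {f f' g : ℝ → ℝ} {a b : ℝ} (hab : a ≤ b)
    (hf : ∀ x ∈ Icc a b, HasDerivWithinAt f (f' x) (Icc a b) x)
    (hg : ContinuousOn g (Icc a b)) (hf' : ∀ x ∈ Icc a b, f' x ≤ g x * f x) :
    f b ≤ f a * exp (∫ x in a..b, g x) := by
  set A : ℝ → ℝ := fun x => ∫ y in a..x, g y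
  have hA_cont : ContinuousOn A (Icc a b) := continuousOn_primitive_of_continuousOn hab hg
  have hA_deriv : ∀ x ∈ Ioo a b, HasDerivAt A (g x) x := fun x hx =>
    intervalIntegral.integral_hasDerivAt_right
      ((hg.mono (Icc_subset_Icc_right hx.2.le)).intervalIntegrable_of_Icc hx.1.le)
      ((hg.mono Ioo_subset_Icc_self).stronglyMeasurableAtFilter isOpen_Ioo x hx)
      (hg.continuousAt (Icc_mem_nhds hx.1 hx.2))
  have h_anti : AntitoneOn (fun x => f x * exp (-A x)) (Icc a b) := by
    refine antitoneOn_of_hasDerivWithinAt_nonpos (convex_Icc a b)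
      (f' := fun x => (f' x - g x * f x) * exp (-A x))
      (fun x hx => (hf x hx).continuousWithinAt.mul (hA_cont x hx).neg.rexp) (fun x hx => ?_)
      (fun x hx => ?_)
    · rw [interior_Icc] at hx ⊢
      have hfx := ((hf x (Ioo_subset_Icc_self hx)).mono Ioo_subset_Icc_self).hasDerivAt
        (Ioo_mem_nhds hx.1 hx.2)
      exact ((hfx.mul (hA_deriv x hx).neg.exp).congr_deriv
        (by simp only [Pi.neg_apply]; ring)).hasDerivWithinAt
    · rw [interior_Icc] at hx
      exact mul_nonpos_of_nonpos_of_nonneg (sub_nonpos.2 (hf' x (Ioo_subset_Icc_self hx)))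
        (exp_pos _).le
  have h := h_anti (left_mem_Icc.2 hab) (right_mem_Icc.2 hab) hab
  simp only [A, intervalIntegral.integral_same, neg_zero, exp_zero, mul_one] at h
  rwa [exp_neg, ← div_eq_mul_inv, div_le_iff₀ (exp_pos _)] at h

/-- `kowE cinf lam u u' t` is `oscillatorEnergy √cinf lam (u t) (u' t)` by definition. -/
noncomputable def oscillatorEnergy (s lam x v : ℝ) : ℝ :=
  v ^ 2 / s + lam ^ 2 * s * x ^ 2

theorem oscillatorEnergy_nonneg {s : ℝ} (hs : 0 ≤ s) (lam x v : ℝ) :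
    0 ≤ oscillatorEnergy s lam x v := by
  unfold oscillatorEnergy
  positivity

theorem two_mul_abs_mul_le_oscillatorEnergy {s : ℝ} (hs : 0 < s) (lam x v : ℝ) :
    2 * lam * |x * v| ≤ oscillatorEnergy s lam x v := by
  unfold oscillatorEnergy
  rw [div_add' _ _ _ hs.ne', le_div_iff₀ hs]
  rcases abs_cases (x * v) with ⟨h, -⟩ | ⟨h, -⟩ <;> rw [h] <;>
    nlinarith [sq_nonneg (v - lam * s * x), sq_nonneg (v + lam * s * x)]

theorem oscillatorEnergy_le_div_mul {a b s s' : ℝ} (ha : 0 < a) (hs : s ∈ Icc a b)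
    (hs' : s' ∈ Icc a b) (lam x v : ℝ) :
    oscillatorEnergy s' lam x v ≤ b / a * oscillatorEnergy s lam x v := by
  have hs0 : 0 < s := ha.trans_le hs.1
  have hs'0 : 0 < s' := ha.trans_le hs'.1
  have h₁ : s ≤ b / a * s' := by
    rw [div_mul_eq_mul_div, le_div_iff₀ ha]; nlinarith [hs.2, hs'.1]
  have h₂ : s' ≤ b / a * s := by
    rw [div_mul_eq_mul_div, le_div_iff₀ ha]; nlinarith [hs'.2, hs.1]
  unfold oscillatorEnergy
  rw [mul_add]
  gcongr ?_ + ?_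
  · rw [div_le_iff₀ hs'0, mul_div_assoc', div_mul_eq_mul_div, le_div_iff₀ hs0]
    nlinarith [sq_nonneg v]
  · nlinarith [mul_le_mul_of_nonneg_left h₂ (mul_nonneg (sq_nonneg lam) (sq_nonneg x))]

theorem hasDerivWithinAt_kowE {cinf lam τ : ℝ} {c u u' : ℝ → ℝ} {s : Set ℝ} (hcinf : 0 < cinf)
    (hu : HasDerivWithinAt u (u' τ) s τ)
    (hu' : HasDerivWithinAt u' (-(lam ^ 2 * c τ * u τ)) s τ) :
    HasDerivWithinAt (kowE cinf lam u u') (2 * lam ^ 2 * (cinf - c τ) / √cinf * (u τ * u' τ))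
      s τ := by
  have hsq : √cinf ^ 2 = cinf := sq_sqrt hcinf.le
  have hne : √cinf ≠ 0 := (sqrt_pos.2 hcinf).ne'
  refine (((hu'.pow 2).div_const √cinf).add ((hu.pow 2).const_mul (lam ^ 2 * √cinf))).congr_deriv ?_
  field_simp
  rw [hsq]
  ring

theorem kowE_le_mul_exp_integral {Λ cinf lam a b : ℝ} {c u u' : ℝ → ℝ} (hΛ : 0 < Λ)
    (hΛcinf : Λ ≤ cinf) (hlam : 0 ≤ lam) (hab : a ≤ b) (hc : ContinuousOn c (Icc a b))
    (hu : ∀ τ ∈ Icc a b, HasDerivWithinAt u (u' τ) (Icc a b) τ)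
    (hu' : ∀ τ ∈ Icc a b, HasDerivWithinAt u' (-(lam ^ 2 * c τ * u τ)) (Icc a b) τ) :
    kowE cinf lam u u' b ≤
      kowE cinf lam u u' a * exp (lam / √Λ * ∫ τ in a..b, |c τ - cinf|) := by
  have hcinf : 0 < cinf := hΛ.trans_le hΛcinf
  have hderiv (τ : ℝ) : 2 * lam ^ 2 * (cinf - c τ) / √cinf * (u τ * u' τ) ≤
      lam / √Λ * |c τ - cinf| * kowE cinf lam u u' τ := by
    have hE := two_mul_abs_mul_le_oscillatorEnergy (sqrt_pos.2 hcinf) lam (u τ) (u' τ)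
    have hlam' : lam / √cinf ≤ lam / √Λ :=
      div_le_div_of_nonneg_left hlam (sqrt_pos.2 hΛ) (sqrt_le_sqrt hΛcinf)
    calc 2 * lam ^ 2 * (cinf - c τ) / √cinf * (u τ * u' τ)
        ≤ |lam / √cinf * (cinf - c τ) * (2 * lam * (u τ * u' τ))| :=
          le_of_eq_of_le (by ring) (le_abs_self _)
      _ = lam / √cinf * |c τ - cinf| * (2 * lam * |u τ * u' τ|) := by
          rw [abs_mul, abs_mul, abs_mul, abs_sub_comm,
            abs_of_nonneg (by positivity : 0 ≤ lam / √cinf),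
            abs_of_nonneg (by positivity : (0 : ℝ) ≤ 2 * lam)]
      _ ≤ lam / √Λ * |c τ - cinf| * kowE cinf lam u u' τ := by gcongr; exact hE
  have h := le_mul_exp_integral_of_hasDerivWithinAt
    (g := fun τ => lam / √Λ * |c τ - cinf|) hab
    (fun τ hτ => hasDerivWithinAt_kowE hcinf (hu τ hτ) (hu' τ hτ))
    (continuousOn_const.mul ((hc.sub continuousOn_const).abs)) (fun τ _ => hderiv τ)
  rwa [intervalIntegral.integral_const_mul] at h

/-- The correction term cancels the part of the derivative of the energy with coefficient `√c`
that is linear in `c'`, leaving only terms of size `γ²`. -/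
noncomputable def correctedEnergy (lam : ℝ) (c c' u u' : ℝ → ℝ) (t : ℝ) : ℝ :=
  oscillatorEnergy √(c t) lam (u t) (u' t) + c' t / (2 * √(c t) ^ 3) * (u t * u' t)

theorem hasDerivWithinAt_correctedEnergy {lam τ : ℝ} {c c' c'' u u' : ℝ → ℝ} {s : Set ℝ}
    (hcτ : 0 < c τ) (hc : HasDerivWithinAt c (c' τ) s τ)
    (hc' : HasDerivWithinAt c' (c'' τ) s τ) (hu : HasDerivWithinAt u (u' τ) s τ)
    (hu' : HasDerivWithinAt u' (-(lam ^ 2 * c τ * u τ)) s τ) :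
    HasDerivWithinAt (correctedEnergy lam c c' u u')
      ((c'' τ / (2 * √(c τ) ^ 3) - 3 * c' τ ^ 2 / (4 * √(c τ) ^ 5)) * (u τ * u' τ)) s τ := by
  have hne : √(c τ) ≠ 0 := (sqrt_pos.2 hcτ).ne'
  have hsq : √(c τ) ^ 2 = c τ := sq_sqrt hcτ.le
  have hsqrt : HasDerivWithinAt (fun t => √(c t)) (c' τ / (2 * √(c τ))) s τ :=
    hc.sqrt hcτ.ne'
  have hE := ((hu'.pow 2).div hsqrt hne).add ((hsqrt.const_mul (lam ^ 2)).mul (hu.pow 2))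
  have hβ := hc'.div ((hsqrt.pow 3).const_mul 2) (mul_ne_zero two_ne_zero (pow_ne_zero 3 hne))
  refine (hE.add (hβ.mul (hu.mul hu'))).congr_deriv ?_
  simp only [Pi.pow_apply, Pi.mul_apply, Pi.div_apply]
  set r := √(c τ)
  rw [← hsq]
  field_simp
  ring

theorem abs_div_two_mul_sqrt_pow_three_le {Λ x d g : ℝ} (hΛ : 0 < Λ) (hx : Λ ≤ x)
    (hd : |d| ≤ g) : |d / (2 * √x ^ 3)| ≤ g / (2 * √Λ ^ 3) := by
  have hx0 : 0 < √x := sqrt_pos.2 (hΛ.trans_le hx)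
  rw [abs_div, abs_of_pos (mul_pos two_pos (pow_pos hx0 3))]
  exact div_le_div₀ ((abs_nonneg d).trans hd) hd (by positivity) (by gcongr)

theorem abs_sub_div_four_mul_sqrt_pow_five_le {Λ x d₁ d₂ g : ℝ} (hΛ : 0 < Λ) (hx : Λ ≤ x)
    (hd₁ : |d₁| ≤ g) (hd₂ : |d₂| ≤ g ^ 2) :
    |d₂ / (2 * √x ^ 3) - 3 * d₁ ^ 2 / (4 * √x ^ 5)| ≤ (2 * Λ + 3) / (4 * √Λ ^ 5) * g ^ 2 := by
  have hx0 : 0 < √x := sqrt_pos.2 (hΛ.trans_le hx)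
  have hΛ0 : 0 < √Λ := sqrt_pos.2 hΛ
  have hd₁' : d₁ ^ 2 ≤ g ^ 2 := sq_le_sq' (abs_le.1 hd₁).1 (abs_le.1 hd₁).2
  have h₂ : |3 * d₁ ^ 2 / (4 * √x ^ 5)| ≤ 3 * g ^ 2 / (4 * √Λ ^ 5) := by
    rw [abs_of_nonneg (by positivity)]
    exact div_le_div₀ (by positivity) (by linarith) (by positivity) (by gcongr)
  calc |d₂ / (2 * √x ^ 3) - 3 * d₁ ^ 2 / (4 * √x ^ 5)|
      ≤ g ^ 2 / (2 * √Λ ^ 3) + 3 * g ^ 2 / (4 * √Λ ^ 5) :=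
        (abs_sub _ _).trans (add_le_add (abs_div_two_mul_sqrt_pow_three_le hΛ hx hd₂) h₂)
    _ = (2 * Λ + 3) / (4 * √Λ ^ 5) * g ^ 2 := by
        field_simp
        rw [sq_sqrt hΛ.le]
        ring

theorem oscillatorEnergy_le_three_mul_exp_integral {Λ lam a b : ℝ} {γ c c' c'' u u' : ℝ → ℝ}
    (hΛ : 0 < Λ) (hlam : 0 < lam) (hab : a ≤ b)
    (hc : ∀ τ ∈ Icc a b, HasDerivWithinAt c (c' τ) (Icc a b) τ)
    (hc' : ∀ τ ∈ Icc a b, HasDerivWithinAt c' (c'' τ) (Icc a b) τ)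
    (hu : ∀ τ ∈ Icc a b, HasDerivWithinAt u (u' τ) (Icc a b) τ)
    (hu' : ∀ τ ∈ Icc a b, HasDerivWithinAt u' (-(lam ^ 2 * c τ * u τ)) (Icc a b) τ)
    (hcΛ : ∀ τ ∈ Icc a b, Λ ≤ c τ) (hγ : ContinuousOn γ (Icc a b))
    (hc'γ : ∀ τ ∈ Icc a b, |c' τ| ≤ γ τ) (hc''γ : ∀ τ ∈ Icc a b, |c'' τ| ≤ γ τ ^ 2)
    (hγlam : ∀ τ ∈ Icc a b, γ τ ≤ 2 * lam * √Λ ^ 3) :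
    oscillatorEnergy √(c b) lam (u b) (u' b) ≤
      3 * oscillatorEnergy √(c a) lam (u a) (u' a) *
        exp ((2 * Λ + 3) / (4 * √Λ ^ 5 * lam) * ∫ τ in a..b, γ τ ^ 2) := by
  set F := fun τ => oscillatorEnergy √(c τ) lam (u τ) (u' τ)
  set R := correctedEnergy lam c c' u u'
  have hcpos (τ) (hτ : τ ∈ Icc a b) : 0 < c τ := hΛ.trans_le (hcΛ τ hτ)
  have huu' (τ) (hτ : τ ∈ Icc a b) : 2 * lam * |u τ * u' τ| ≤ F τ :=
    two_mul_abs_mul_le_oscillatorEnergy (sqrt_pos.2 (hcpos τ hτ)) lam (u τ) (u' τ)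
  -- the correction term is at most `F / 2` because `γ ≤ 2 λ Λ^{3/2}`
  have hRF (τ) (hτ : τ ∈ Icc a b) : |R τ - F τ| ≤ F τ / 2 := by
    have hβ : |c' τ / (2 * √(c τ) ^ 3)| ≤ lam :=
      (abs_div_two_mul_sqrt_pow_three_le hΛ (hcΛ τ hτ) (hc'γ τ hτ)).trans <| by
        rw [div_le_iff₀ (by positivity)]
        linarith [hγlam τ hτ]
    calc |R τ - F τ| = |c' τ / (2 * √(c τ) ^ 3)| * |u τ * u' τ| := by
          simp only [R, F, correctedEnergy, add_sub_cancel_left, abs_mul]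
      _ ≤ lam * |u τ * u' τ| := by gcongr
      _ ≤ F τ / 2 := by linarith [huu' τ hτ]
  have hR' (τ) (hτ : τ ∈ Icc a b) :
      (c'' τ / (2 * √(c τ) ^ 3) - 3 * c' τ ^ 2 / (4 * √(c τ) ^ 5)) * (u τ * u' τ) ≤
        (2 * Λ + 3) / (4 * √Λ ^ 5 * lam) * γ τ ^ 2 * R τ := by
    have hD := abs_sub_div_four_mul_sqrt_pow_five_le hΛ (hcΛ τ hτ) (hc'γ τ hτ) (hc''γ τ hτ)
    have huR : |u τ * u' τ| ≤ R τ / lam := by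
      rw [le_div_iff₀ hlam]
      linarith [huu' τ hτ, (abs_le.1 (hRF τ hτ)).1]
    calc (c'' τ / (2 * √(c τ) ^ 3) - 3 * c' τ ^ 2 / (4 * √(c τ) ^ 5)) * (u τ * u' τ)
        ≤ |c'' τ / (2 * √(c τ) ^ 3) - 3 * c' τ ^ 2 / (4 * √(c τ) ^ 5)| * |u τ * u' τ| :=
          (le_abs_self _).trans (abs_mul _ _).le
      _ ≤ (2 * Λ + 3) / (4 * √Λ ^ 5) * γ τ ^ 2 * (R τ / lam) := by gcongr
      _ = (2 * Λ + 3) / (4 * √Λ ^ 5 * lam) * γ τ ^ 2 * R τ := by field_simp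
  have hgron := le_mul_exp_integral_of_hasDerivWithinAt
    (g := fun τ => (2 * Λ + 3) / (4 * √Λ ^ 5 * lam) * γ τ ^ 2) hab
    (fun τ hτ => hasDerivWithinAt_correctedEnergy (hcpos τ hτ) (hc τ hτ) (hc' τ hτ) (hu τ hτ)
      (hu' τ hτ))
    (continuousOn_const.mul (hγ.pow 2)) hR'
  rw [intervalIntegral.integral_const_mul] at hgron
  have hb := abs_le.1 (hRF b (right_mem_Icc.2 hab))
  have ha := abs_le.1 (hRF a (left_mem_Icc.2 hab))
  calc F b ≤ 2 * R b := by linarith [hb.1]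
    _ ≤ 2 * (R a * exp ((2 * Λ + 3) / (4 * √Λ ^ 5 * lam) * ∫ τ in a..b, γ τ ^ 2)) := by
        linarith
    _ ≤ 2 * (3 / 2 * F a * exp ((2 * Λ + 3) / (4 * √Λ ^ 5 * lam) * ∫ τ in a..b, γ τ ^ 2)) := by
        gcongr
        linarith [ha.2]
    _ = 3 * F a * exp ((2 * Λ + 3) / (4 * √Λ ^ 5 * lam) * ∫ τ in a..b, γ τ ^ 2) := by ring

theorem exists_mem_Icc_mul_add_mul_le_two_mul_sqrt {G S I : ℝ → ℝ} {p q a b : ℝ} (hab : a ≤ b)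
    (hp : 0 ≤ p) (hq : 0 ≤ q) (hG : ContinuousOn G (Icc a b)) (hS : ContinuousOn S (Icc a b))
    (hGa : G a = 0) (hG0 : ∀ x ∈ Icc a b, 0 ≤ G x) (hSa : 0 ≤ S a)
    (hIS : ∀ x ∈ Icc a b, I x ≤ S x) (hIb : I b = 0) :
    ∃ σ ∈ Icc a b, p * G σ + q * I σ ≤ 2 * √(p * q * (G σ * S σ)) := by
  have hσ : ∃ σ ∈ Icc a b, p * G σ ≤ q * S σ ∧ q * I σ ≤ p * G σ := by
    rcases le_total (p * G b) (q * S b) with hle | hge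
    · refine ⟨b, right_mem_Icc.2 hab, hle, ?_⟩
      rw [hIb, mul_zero]
      exact mul_nonneg hp (hG0 b (right_mem_Icc.2 hab))
    · obtain ⟨σ, hσ, hσ0⟩ := intermediate_value_Icc hab
        ((hG.const_smul p).sub (hS.const_smul q))
        ⟨by simpa [hGa] using mul_nonneg hq hSa, sub_nonneg.2 hge⟩
      have heq : p * G σ = q * S σ := sub_eq_zero.1 hσ0
      exact ⟨σ, hσ, heq.le, heq ▸ mul_le_mul_of_nonneg_left (hIS σ hσ) hq⟩
  obtain ⟨σ, hσ, hGS, hIG⟩ := hσ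
  refine ⟨σ, hσ, ?_⟩
  have hpG : 0 ≤ p * G σ := mul_nonneg hp (hG0 σ hσ)
  have : p * G σ ≤ √(p * q * (G σ * S σ)) := le_sqrt_of_sq_le <|
    calc (p * G σ) ^ 2 = p * G σ * (p * G σ) := sq _
      _ ≤ p * G σ * (q * S σ) := mul_le_mul_of_nonneg_left hGS hpG
      _ = p * q * (G σ * S σ) := by ring
  linarith

theorem Gfun_mul_le_Mfun {t0 t σ : ℝ} {γ S : ℝ → ℝ} (hγ : ContinuousOn γ (Icc t0 t))
    (hS : ContinuousOn S (Icc t0 t)) (hσ : σ ∈ Icc t0 t) :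
    Gfun t0 γ σ * S σ ≤ Mfun t0 γ S t :=
  le_csSup (isCompact_Icc.image_of_continuousOn
      ((continuousOn_primitive_of_continuousOn (hσ.1.trans hσ.2) (hγ.pow 2)).mul hS)).bddAbove
    (mem_image_of_mem _ hσ)

theorem two_mul_sqrt_mul_eq_sqrt_div_rpow_mul_sqrt {Λ lam : ℝ} (hΛ : 0 < Λ) (hlam : 0 < lam)
    (X : ℝ) :
    2 * √((2 * Λ + 3) / (4 * √Λ ^ 5 * lam) * (lam / √Λ) * X) =
      √(2 * Λ + 3) / Λ ^ ((3 : ℝ) / 2) * √X := by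
  have hΛ3 : Λ ^ ((3 : ℝ) / 2) = √Λ ^ 3 := by
    rw [sqrt_eq_rpow, ← rpow_mul_natCast hΛ.le]
    norm_num
  have h : (2 * Λ + 3) / (4 * √Λ ^ 5 * lam) * (lam / √Λ) =
      (√(2 * Λ + 3) / (2 * √Λ ^ 3)) ^ 2 := by
    have := sqrt_pos.2 hΛ
    rw [div_pow, sq_sqrt (by positivity)]
    field_simp
    norm_num
  rw [h, sqrt_mul (sq_nonneg _), sqrt_sq (by positivity), hΛ3]
  field_simp

theorem kowE_le_mul_exp_add_of_mem_Icc {t0 t σ Λ1 Λ2 cinf lam : ℝ}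
    {γ c c' c'' u u' : ℝ → ℝ} (hΛ1 : 0 < Λ1)
    (hγ_cont : ContinuousOn γ (Ici t0)) (hγ_anti : AntitoneOn γ (Ici t0))
    (hc1 : ∀ t ∈ Ici t0, HasDerivWithinAt c (c' t) (Ici t0) t)
    (hc2 : ∀ t ∈ Ici t0, HasDerivWithinAt c' (c'' t) (Ici t0) t)
    (hhyp : ∀ t ∈ Ici t0, Λ1 ≤ c t ∧ c t ≤ Λ2) (hcinf : cinf ∈ Icc Λ1 Λ2)
    (hder : ∀ t ∈ Ici t0, |c' t| ≤ γ t ∧ |c'' t| ≤ (γ t) ^ 2) (hlam : 0 < lam)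
    (hu : ∀ t ∈ Ici t0, HasDerivWithinAt u (u' t) (Ici t0) t)
    (hu' : ∀ t ∈ Ici t0, HasDerivWithinAt u' (-(lam ^ 2 * c t * u t)) (Ici t0) t)
    (hγt0 : γ t0 ≤ 2 * lam * √Λ1 ^ 3) (hσ : σ ∈ Icc t0 t) :
    kowE cinf lam u u' t ≤ kowE cinf lam u u' t0 * (3 * Λ2 / Λ1) *
      exp ((2 * Λ1 + 3) / (4 * √Λ1 ^ 5 * lam) * Gfun t0 γ σ +
        lam / √Λ1 * ∫ τ in σ..t, |c τ - cinf|) := by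
  set K := (2 * Λ1 + 3) / (4 * √Λ1 ^ 5 * lam)
  set r := √Λ2 / √Λ1
  have hsub₁ : Icc t0 σ ⊆ Ici t0 := Icc_subset_Ici_self
  have hsub₂ : Icc σ t ⊆ Ici t0 := fun x hx => hσ.1.trans hx.1
  have hsqrt (τ) (hτ : τ ∈ Ici t0) : √(c τ) ∈ Icc √Λ1 √Λ2 :=
    ⟨sqrt_le_sqrt (hhyp τ hτ).1, sqrt_le_sqrt (hhyp τ hτ).2⟩
  have hsqrt_inf : √cinf ∈ Icc √Λ1 √Λ2 := ⟨sqrt_le_sqrt hcinf.1, sqrt_le_sqrt hcinf.2⟩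
  have hphase₁ : oscillatorEnergy √(c σ) lam (u σ) (u' σ) ≤
      3 * oscillatorEnergy √(c t0) lam (u t0) (u' t0) * exp (K * Gfun t0 γ σ) :=
    oscillatorEnergy_le_three_mul_exp_integral hΛ1 hlam hσ.1
    (fun τ hτ => (hc1 τ (hsub₁ hτ)).mono hsub₁) (fun τ hτ => (hc2 τ (hsub₁ hτ)).mono hsub₁)
    (fun τ hτ => (hu τ (hsub₁ hτ)).mono hsub₁) (fun τ hτ => (hu' τ (hsub₁ hτ)).mono hsub₁)
    (fun τ hτ => (hhyp τ (hsub₁ hτ)).1) (hγ_cont.mono hsub₁) (fun τ hτ => (hder τ hτ.1).1)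
    (fun τ hτ => (hder τ hτ.1).2) (fun τ hτ => (hγ_anti self_mem_Ici hτ.1 hτ.1).trans hγt0)
  have hphase₂ := kowE_le_mul_exp_integral hΛ1 hcinf.1 hlam.le hσ.2
    (fun τ hτ => (hc1 τ (hsub₂ hτ)).continuousWithinAt.mono hsub₂)
    (fun τ hτ => (hu τ (hsub₂ hτ)).mono hsub₂) (fun τ hτ => (hu' τ (hsub₂ hτ)).mono hsub₂)
  have hEF := oscillatorEnergy_le_div_mul (sqrt_pos.2 hΛ1) (hsqrt σ hσ.1) hsqrt_inf lam
    (u σ) (u' σ)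
  have hFE := oscillatorEnergy_le_div_mul (sqrt_pos.2 hΛ1) hsqrt_inf (hsqrt t0 self_mem_Ici) lam
    (u t0) (u' t0)
  have hrr : r * r = Λ2 / Λ1 := by
    rw [div_mul_div_comm, mul_self_sqrt hΛ1.le,
      mul_self_sqrt (hΛ1.le.trans (hcinf.1.trans hcinf.2))]
  calc kowE cinf lam u u' t
      ≤ r * (3 * (r * kowE cinf lam u u' t0) * exp (K * Gfun t0 γ σ)) *
          exp (lam / √Λ1 * ∫ τ in σ..t, |c τ - cinf|) := by
        refine hphase₂.trans ?_
        gcongr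
        refine hEF.trans ?_
        gcongr
        refine hphase₁.trans ?_
        gcongr
        exact hFE
    _ = _ := by
        rw [exp_add, mul_div_assoc, ← hrr]
        ring

theorem kowE_le_mul_exp_sqrt_Mfun_of_le {t0 t Λ1 Λ2 cinf lam : ℝ}
    {S γ c c' c'' u u' : ℝ → ℝ} (hΛ1 : 0 < Λ1)
    (hS_cont : ContinuousOn S (Ici t0))
    (hγ_cont : ContinuousOn γ (Ici t0)) (hγ_anti : AntitoneOn γ (Ici t0))
    (hc1 : ∀ t ∈ Ici t0, HasDerivWithinAt c (c' t) (Ici t0) t)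
    (hc2 : ∀ t ∈ Ici t0, HasDerivWithinAt c' (c'' t) (Ici t0) t)
    (hhyp : ∀ t ∈ Ici t0, Λ1 ≤ c t ∧ c t ≤ Λ2) (hcinf : cinf ∈ Icc Λ1 Λ2)
    (hstab : ∀ t ∈ Ici t0, ∀ b ≥ t, (∫ τ in t..b, |c τ - cinf|) ≤ S t)
    (hder : ∀ t ∈ Ici t0, |c' t| ≤ γ t ∧ |c'' t| ≤ (γ t) ^ 2) (hlam : 0 < lam)
    (hu : ∀ t ∈ Ici t0, HasDerivWithinAt u (u' t) (Ici t0) t)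
    (hu' : ∀ t ∈ Ici t0, HasDerivWithinAt u' (-(lam ^ 2 * c t * u t)) (Ici t0) t)
    (hγt0 : γ t0 ≤ 2 * lam * √Λ1 ^ 3) (ht : t0 ≤ t) :
    kowE cinf lam u u' t ≤ kowE cinf lam u u' t0 * (3 * Λ2 / Λ1) *
      exp (√(2 * Λ1 + 3) / Λ1 ^ ((3 : ℝ) / 2) * √(Mfun t0 γ S t)) := by
  have hsub : Icc t0 t ⊆ Ici t0 := Icc_subset_Ici_self
  obtain ⟨σ, hσ, hbal⟩ := exists_mem_Icc_mul_add_mul_le_two_mul_sqrt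
    (p := (2 * Λ1 + 3) / (4 * √Λ1 ^ 5 * lam)) (q := lam / √Λ1)
    (I := fun σ => ∫ τ in σ..t, |c τ - cinf|) ht (by positivity) (by positivity)
    (continuousOn_primitive_of_continuousOn ht ((hγ_cont.mono hsub).pow 2))
    (hS_cont.mono hsub) intervalIntegral.integral_same
    (fun x hx => intervalIntegral.integral_nonneg hx.1 fun _ _ => sq_nonneg _)
    (by simpa using hstab t0 self_mem_Ici t0 le_rfl) (fun x hx => hstab x hx.1 t hx.2)
    intervalIntegral.integral_same
  have hE0 : 0 ≤ kowE cinf lam u u' t0 := oscillatorEnergy_nonneg (sqrt_nonneg _) _ _ _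
  have hratio : 0 ≤ 3 * Λ2 / Λ1 := by
    have := hΛ1.le.trans (hcinf.1.trans hcinf.2)
    positivity
  refine (kowE_le_mul_exp_add_of_mem_Icc hΛ1 hγ_cont hγ_anti hc1 hc2 hhyp hcinf hder hlam hu hu'
    hγt0 hσ).trans ?_
  gcongr
  refine hbal.trans ?_
  rw [two_mul_sqrt_mul_eq_sqrt_div_rpow_mul_sqrt hΛ1 hlam]
  gcongr
  exact Gfun_mul_le_Mfun (hγ_cont.mono hsub) (hS_cont.mono hsub) hσ

theorem kowE_le_mul_exp_of_lt {t0 t Λ1 cinf lam : ℝ} {S γ c c' u u' : ℝ → ℝ} (hΛ1 : 0 < Λ1)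
    (hc1 : ∀ t ∈ Ici t0, HasDerivWithinAt c (c' t) (Ici t0) t) (hcinf : Λ1 ≤ cinf)
    (hstab : ∀ t ∈ Ici t0, ∀ b ≥ t, (∫ τ in t..b, |c τ - cinf|) ≤ S t) (hlam : 0 < lam)
    (hu : ∀ t ∈ Ici t0, HasDerivWithinAt u (u' t) (Ici t0) t)
    (hu' : ∀ t ∈ Ici t0, HasDerivWithinAt u' (-(lam ^ 2 * c t * u t)) (Ici t0) t)
    (hγt0 : 2 * lam * √Λ1 ^ 3 < γ t0) (ht : t0 ≤ t) :
    kowE cinf lam u u' t ≤ kowE cinf lam u u' t0 * exp (γ t0 * S t0 / (2 * Λ1 ^ 2)) := by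
  have hsub : Icc t0 t ⊆ Ici t0 := Icc_subset_Ici_self
  refine (kowE_le_mul_exp_integral hΛ1 hcinf hlam.le ht
    (fun τ hτ => (hc1 τ (hsub hτ)).continuousWithinAt.mono hsub)
    (fun τ hτ => (hu τ (hsub hτ)).mono hsub) (fun τ hτ => (hu' τ (hsub hτ)).mono hsub)).trans ?_
  have hcoef : lam / √Λ1 ≤ γ t0 / (2 * Λ1 ^ 2) := by
    have h4 : √Λ1 ^ 4 = Λ1 ^ 2 := by rw [show 4 = 2 * 2 from rfl, pow_mul, sq_sqrt hΛ1.le]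
    rw [div_le_div_iff₀ (sqrt_pos.2 hΛ1) (by positivity)]
    nlinarith [mul_lt_mul_of_pos_right hγt0 (sqrt_pos.2 hΛ1)]
  refine mul_le_mul_of_nonneg_left (exp_le_exp.2 ?_) (oscillatorEnergy_nonneg (sqrt_nonneg _) _ _ _)
  calc lam / √Λ1 * ∫ τ in t0..t, |c τ - cinf|
      ≤ γ t0 / (2 * Λ1 ^ 2) * S t0 :=
        mul_le_mul hcoef (hstab t0 self_mem_Ici t ht)
          (intervalIntegral.integral_nonneg ht fun _ _ => abs_nonneg _)
          ((div_nonneg hlam.le (sqrt_nonneg _)).trans hcoef)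
    _ = γ t0 * S t0 / (2 * Λ1 ^ 2) := by ring

theorem energy_estimate_above_gamma_nonincreasing
    (t0 Λ1 Λ2 : ℝ) (hΛ1 : 0 < Λ1)
    (S γ : ℝ → ℝ)
    (hS_cont : ContinuousOn S (Ici t0))
    (hγ_cont : ContinuousOn γ (Ici t0)) (hγ_anti : AntitoneOn γ (Ici t0))
    (c c' c'' : ℝ → ℝ)
    (hc1 : ∀ t ∈ Ici t0, HasDerivWithinAt c (c' t) (Ici t0) t)
    (hc2 : ∀ t ∈ Ici t0, HasDerivWithinAt c' (c'' t) (Ici t0) t)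
    (hhyp : ∀ t ∈ Ici t0, Λ1 ≤ c t ∧ c t ≤ Λ2)
    (cinf : ℝ) (hcinf : cinf ∈ Icc Λ1 Λ2)
    (hstab : ∀ t ∈ Ici t0, ∀ b ≥ t, (∫ τ in t..b, |c τ - cinf|) ≤ S t)
    (hder : ∀ t ∈ Ici t0, |c' t| ≤ γ t ∧ |c'' t| ≤ (γ t) ^ 2)
    (lam : ℝ) (hlam : 0 < lam)
    (u u' : ℝ → ℝ)
    (hu : ∀ t ∈ Ici t0, HasDerivWithinAt u (u' t) (Ici t0) t)
    (hu' : ∀ t ∈ Ici t0, HasDerivWithinAt u' (-(lam ^ 2 * c t * u t)) (Ici t0) t) :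
    ∀ t ∈ Ici t0,
      kowE cinf lam u u' t ≤
        kowE cinf lam u u' t0 *
          max (3 * Λ2 / Λ1) (Real.exp (γ t0 * S t0 / (2 * Λ1 ^ 2))) *
          Real.exp (Real.sqrt (2 * Λ1 + 3) / Λ1 ^ ((3 : ℝ) / 2) *
            Real.sqrt (Mfun t0 γ S t)) := by
  intro t ht
  have hE0 : 0 ≤ kowE cinf lam u u' t0 := oscillatorEnergy_nonneg (sqrt_nonneg _) _ _ _
  rcases le_or_gt (γ t0) (2 * lam * √Λ1 ^ 3) with hγt0 | hγt0
  · refine (kowE_le_mul_exp_sqrt_Mfun_of_le hΛ1 hS_cont hγ_cont hγ_anti hc1 hc2 hhyp hcinf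
      hstab hder hlam hu hu' hγt0 ht).trans ?_
    gcongr
    exact le_max_left _ _
  · refine (kowE_le_mul_exp_of_lt hΛ1 hc1 hcinf.1 hstab hlam hu hu' hγt0 ht).trans <|
      (mul_le_mul_of_nonneg_left (le_max_right _ _) hE0).trans <|
        le_mul_of_one_le_right (mul_nonneg hE0 ((exp_pos _).le.trans (le_max_right _ _)))
          (one_le_exp (by positivity))
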